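/- arXiv:2106.06854 — 2 statements merged into one kernel-verified Lean document; each statement's English description precedes it below -/
import Mathlib

section
/- Least-squares characterization (Theorem 3): if the successor representation is exact in the sense that (1−γ)·(1/|D₀|)·𝟏ᵀΨ = (1/|D|)·𝟏ᵀ·diag(d^π/d^D)·Φ, then the optimizer w* = (1−γ)·(|D|/|D₀|)·(ΦᵀΦ)⁻¹Ψᵀ𝟏 equals the least-squares estimator (ΦᵀΦ)⁻¹Φᵀ·(d^π/d^D), i.e. the minimizer of Σ_i (wᵀφ_i − (d^π/d^D)_i)². -/
/-!
Multiplying the exactness condition of the successor representation by `|D|` turns it into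
`(1 - γ) (|D| / |D₀|) Ψᵀ𝟏 = Φᵀρ`, so `w*` is literally `(ΦᵀΦ)⁻¹Φᵀρ`. This vector solves the
normal equations `ΦᵀΦ w = Φᵀρ`, i.e. its residual `Φw* - ρ` is orthogonal to the column space
of `Φ`, and by Pythagoras no other `w` has a smaller residual.
-/

open Matrix

section LeastSquares

variable {ι κ : Type*} [Fintype ι] [Fintype κ]

theorem sum_sq_eq_dotProduct_self (r : ι → ℝ) : ∑ i, r i ^ 2 = r ⬝ᵥ r := by
  simp only [dotProduct, sq]

theorem sum_sq_residual_le_of_normal_eq {Φ : Matrix ι κ ℝ} {ρ : ι → ℝ} {w : κ → ℝ}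
    (hw : (Φᵀ * Φ) *ᵥ w = Φᵀ *ᵥ ρ) (v : κ → ℝ) :
    ∑ i, ((Φ *ᵥ w) i - ρ i) ^ 2 ≤ ∑ i, ((Φ *ᵥ v) i - ρ i) ^ 2 := by
  set r := Φ *ᵥ w - ρ
  set d := Φ *ᵥ (v - w)
  have horth : r ⬝ᵥ d = 0 := by
    rw [dotProduct_mulVec, ← mulVec_transpose, mulVec_sub, mulVec_mulVec, hw, sub_self,
      zero_dotProduct]
  have hsplit : Φ *ᵥ v - ρ = r + d := by
    simp only [r, d, mulVec_sub]; abel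
  have hd : 0 ≤ d ⬝ᵥ d := by simpa using dotProduct_self_star_nonneg d
  calc ∑ i, ((Φ *ᵥ w) i - ρ i) ^ 2 = r ⬝ᵥ r := sum_sq_eq_dotProduct_self r
    _ ≤ r ⬝ᵥ r + 2 * (r ⬝ᵥ d) + d ⬝ᵥ d := by rw [horth]; linarith
    _ = (r + d) ⬝ᵥ (r + d) := by
        rw [add_dotProduct, dotProduct_add, dotProduct_add, dotProduct_comm d r]; ring
    _ = ∑ i, ((Φ *ᵥ v) i - ρ i) ^ 2 := by rw [← hsplit, ← sum_sq_eq_dotProduct_self]; rfl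

variable [DecidableEq κ]

theorem normal_eq_leastSquares {Φ : Matrix ι κ ℝ} (hinv : IsUnit (Φᵀ * Φ).det) (ρ : ι → ℝ) :
    (Φᵀ * Φ) *ᵥ ((Φᵀ * Φ)⁻¹ *ᵥ Φᵀ *ᵥ ρ) = Φᵀ *ᵥ ρ := by
  rw [mulVec_mulVec, mul_nonsing_inv _ hinv, one_mulVec]

end LeastSquares

theorem vecMul_one_diagonal_mul {ι κ : Type*} [Fintype ι] [DecidableEq ι]
    (ρ : ι → ℝ) (Φ : Matrix ι κ ℝ) : (1 : ι → ℝ) ᵥ* (diagonal ρ * Φ) = Φᵀ *ᵥ ρ := by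
  rw [← vecMul_vecMul, mulVec_transpose]
  congr 1; ext i; simp [vecMul_diagonal]

-- At `n = 0` the factor is `0 • (1 / 0) = 0`, but then `Φᵀ *ᵥ ρ` is an empty sum.
theorem natCast_smul_one_div_smul_mulVec {n : ℕ} {κ : Type*} (Φ : Matrix (Fin n) κ ℝ)
    (ρ : Fin n → ℝ) : (n : ℝ) • (1 / (n : ℝ)) • Φᵀ *ᵥ ρ = Φᵀ *ᵥ ρ := by
  rcases Nat.eq_zero_or_pos n with rfl | hn
  · ext j; simp [mulVec, dotProduct]
  · rw [smul_smul, mul_one_div_cancel (by positivity), one_smul]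

theorem stmt_13_general {n m F : ℕ}
    (Φ : Matrix (Fin n) (Fin F) ℝ) (Ψ : Matrix (Fin m) (Fin F) ℝ)
    (ρ : Fin n → ℝ) (m₀ : ℝ)
    (γ : ℝ)
    (hinv : IsUnit (Φᵀ * Φ).det)
    (hSR : ((1 - γ) * (1 / m₀)) • Matrix.vecMul (1 : Fin m → ℝ) Ψ
      = (1 / (n : ℝ)) • Matrix.vecMul (1 : Fin n → ℝ) (Matrix.diagonal ρ * Φ))
    (wstar : Fin F → ℝ)
    (hwstar : wstar = ((1 - γ) * ((n : ℝ) / m₀)) •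
      (Φᵀ * Φ)⁻¹.mulVec (Ψᵀ.mulVec (1 : Fin m → ℝ))) :
    wstar = (Φᵀ * Φ)⁻¹.mulVec (Φᵀ.mulVec ρ) ∧
    (∀ w : Fin F → ℝ,
      ∑ i, (wstar ⬝ᵥ (fun j => Φ i j) - ρ i)^2 ≤ ∑ i, (w ⬝ᵥ (fun j => Φ i j) - ρ i)^2) := by
  have hscaled : ((1 - γ) * (n / m₀)) • Ψᵀ *ᵥ 1 = Φᵀ *ᵥ ρ := by
    rw [mulVec_transpose, show (1 - γ) * (n / m₀) = n * ((1 - γ) * (1 / m₀)) by ring,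
      mul_smul, hSR, vecMul_one_diagonal_mul, natCast_smul_one_div_smul_mulVec]
  have hls : wstar = (Φᵀ * Φ)⁻¹ *ᵥ Φᵀ *ᵥ ρ := by rw [hwstar, ← mulVec_smul, hscaled]
  have hrow (v : Fin F → ℝ) (i : Fin n) : v ⬝ᵥ (fun j => Φ i j) = (Φ *ᵥ v) i :=
    dotProduct_comm _ _
  refine ⟨hls, fun w => ?_⟩
  simp only [hrow]
  exact sum_sq_residual_le_of_normal_eq (hls ▸ normal_eq_leastSquares hinv ρ) w

/-- Least-squares characterization (Theorem 3): if the successor representation is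
exact, i.e. `(1−γ)·(1/|D₀|)·𝟏ᵀΨ = (1/|D|)·𝟏ᵀ·diag(ρ)·Φ` with `ρ = d^π/d^D`, then
`w* = (1−γ)·(|D|/|D₀|)·(ΦᵀΦ)⁻¹Ψᵀ𝟏` equals the least-squares estimator
`(ΦᵀΦ)⁻¹Φᵀρ`, the minimizer of `Σ_i (wᵀφ_i − ρ_i)²`. -/
theorem stmt_13 {n m F : ℕ}
    (Φ : Matrix (Fin n) (Fin F) ℝ) (Ψ : Matrix (Fin m) (Fin F) ℝ)
    (ρ : Fin n → ℝ) (hn : 0 < n) (m₀ : ℝ) (hm₀ : 0 < m₀)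
    (γ : ℝ) (hγ0 : 0 ≤ γ) (hγ1 : γ < 1)
    (hinv : IsUnit (Φᵀ * Φ).det)
    (hSR : ((1 - γ) * (1 / m₀)) • Matrix.vecMul (1 : Fin m → ℝ) Ψ
      = (1 / (n : ℝ)) • Matrix.vecMul (1 : Fin n → ℝ) (Matrix.diagonal ρ * Φ))
    (wstar : Fin F → ℝ)
    (hwstar : wstar = ((1 - γ) * ((n : ℝ) / m₀)) •
      (Φᵀ * Φ)⁻¹.mulVec (Ψᵀ.mulVec (1 : Fin m → ℝ))) :
    wstar = (Φᵀ * Φ)⁻¹.mulVec (Φᵀ.mulVec ρ) ∧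
    (∀ w : Fin F → ℝ,
      ∑ i, (wstar ⬝ᵥ (fun j => Φ i j) - ρ i)^2 ≤ ∑ i, (w ⬝ᵥ (fun j => Φ i j) - ρ i)^2) :=
  stmt_13_general Φ Ψ ρ m₀ γ hinv hSR wstar hwstar
end

section
/- If the true density ratio vector ρ ∈ ℝⁿ lies in the column span of Φ, i.e. ρ = Φv for some v, and the SR-exactness condition (1−γ)·(1/|D₀|)·Ψᵀ𝟏 = (1/|D|)·Φᵀρ holds, then the SR-DICE ratios Φw* with w* = (1−γ)·(|D|/|D₀|)·(ΦᵀΦ)⁻¹Ψᵀ𝟏 recover ρ exactly: Φw* = ρ. -/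
/-!
The SR-exactness condition turns `w*` into the least-squares solution `(ΦᵀΦ)⁻¹Φᵀρ`,
and least squares is exact on the column span of `Φ`.
-/

open Matrix

theorem Matrix.inv_transpose_mul_self_mulVec_transpose_mulVec_mulVec
    {ι κ R : Type*} [Fintype ι] [Fintype κ] [DecidableEq κ] [CommRing R]
    (Φ : Matrix ι κ R) (hΦ : IsUnit (Φᵀ * Φ).det) (v : κ → R) :
    (Φᵀ * Φ)⁻¹ *ᵥ (Φᵀ *ᵥ (Φ *ᵥ v)) = v := by
  rw [mulVec_mulVec, mulVec_mulVec, Matrix.mul_assoc, nonsing_inv_mul _ hΦ, one_mulVec]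

theorem stmt_16_general {n m F : ℕ}
    (Φ : Matrix (Fin n) (Fin F) ℝ) (Ψ : Matrix (Fin m) (Fin F) ℝ)
    (ρ : Fin n → ℝ) (hn : 0 < n) (m₀ : ℝ)
    (γ : ℝ)
    (hinv : IsUnit (Φᵀ * Φ).det)
    (hspan : ∃ v : Fin F → ℝ, ρ = Φ.mulVec v)
    (hSR : ((1 - γ) * (1 / m₀)) • Ψᵀ.mulVec (1 : Fin m → ℝ)
      = (1 / (n : ℝ)) • Φᵀ.mulVec ρ)
    (wstar : Fin F → ℝ)
    (hwstar : wstar = ((1 - γ) * ((n : ℝ) / m₀)) •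
      (Φᵀ * Φ)⁻¹.mulVec (Ψᵀ.mulVec (1 : Fin m → ℝ))) :
    Φ.mulVec wstar = ρ := by
  obtain ⟨v, rfl⟩ := hspan
  suffices wstar = v by rw [this]
  have hn' : (n : ℝ) ≠ 0 := Nat.cast_ne_zero.mpr hn.ne'
  have hwstar_SR : wstar = (n : ℝ) • (Φᵀ * Φ)⁻¹ *ᵥ (((1 - γ) * (1 / m₀)) • Ψᵀ *ᵥ 1) := by
    rw [hwstar, mulVec_smul, smul_smul]
    ring_nf
  rw [hwstar_SR, hSR, mulVec_smul, smul_smul, mul_one_div_cancel hn', one_smul,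
    inv_transpose_mul_self_mulVec_transpose_mulVec_mulVec Φ hinv]

/-- If the density-ratio vector `ρ` lies in the column span of `Φ` and the
SR-exactness condition `(1−γ)·(1/|D₀|)·Ψᵀ𝟏 = (1/|D|)·Φᵀρ` holds, then the SR-DICE
ratios `Φw*` recover `ρ` exactly. -/
theorem stmt_16 {n m F : ℕ}
    (Φ : Matrix (Fin n) (Fin F) ℝ) (Ψ : Matrix (Fin m) (Fin F) ℝ)
    (ρ : Fin n → ℝ) (hn : 0 < n) (m₀ : ℝ) (hm₀ : 0 < m₀)
    (γ : ℝ) (hγ0 : 0 ≤ γ) (hγ1 : γ < 1)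
    (hinv : IsUnit (Φᵀ * Φ).det)
    (hspan : ∃ v : Fin F → ℝ, ρ = Φ.mulVec v)
    (hSR : ((1 - γ) * (1 / m₀)) • Ψᵀ.mulVec (1 : Fin m → ℝ)
      = (1 / (n : ℝ)) • Φᵀ.mulVec ρ)
    (wstar : Fin F → ℝ)
    (hwstar : wstar = ((1 - γ) * ((n : ℝ) / m₀)) •
      (Φᵀ * Φ)⁻¹.mulVec (Ψᵀ.mulVec (1 : Fin m → ℝ))) :
    Φ.mulVec wstar = ρ :=
  stmt_16_general Φ Ψ ρ hn m₀ γ hinv hspan hSR wstar hwstar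
end
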